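/- (Acyclicity characterization underlying the NOTEARS constraint.) Let d ≥ 1 and B ∈ ℝ^{d×d}. Then Tr(exp(B∘B)) = d if and only if the matrix B∘B is nilpotent, i.e., (B∘B)^d = 0; equivalently, B represents a directed acyclic graph (the directed graph with an edge j → i whenever B_{ji} ≠ 0 has no directed cycles). -/

import Mathlib

/-!
`A = B ⊙ B` is entrywise nonnegative with the same support as `B`. Expanding the exponential,
`tr (exp A) = d + ∑_{k ≥ 1} tr (A ^ k) / k!` is a sum of nonnegative terms, so it equals `d` iff
`tr (A ^ k) = 0` for all `k ≥ 1`. For a nonnegative matrix `(A ^ k) i i > 0` as soon as there is a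
closed walk of length `k` through `i`, so vanishing traces force acyclicity. In an acyclic graph
the number of vertices from which a vertex can be reached strictly increases along every edge,
so walks have length less than `d` and `A ^ d = 0`; and powers of a nilpotent matrix are traceless.
-/

open Matrix
open scoped Nat

theorem HasSum.eq_apply_iff_forall_ne_eq_zero {ι α : Type*} [AddCommGroup α] [PartialOrder α]
    [IsOrderedAddMonoid α] [TopologicalSpace α] [OrderClosedTopology α] {f : ι → α} {a : α}
    (hf : HasSum f a) (hf₀ : ∀ j, 0 ≤ f j) (i : ι) : a = f i ↔ ∀ j ≠ i, f j = 0 := by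
  classical
  constructor
  · rintro rfl j hji
    have hle : f i + f j ≤ f i := by
      simpa [Finset.sum_pair hji.symm] using sum_le_hasSum {i, j} (fun k _ => hf₀ k) hf
    exact le_antisymm (by simpa using hle) (hf₀ j)
  · exact fun h => hf.unique (hasSum_single i h)

namespace Matrix

variable {n R : Type*} [Fintype n] [DecidableEq n]

def IsAcyclic [Zero R] (A : Matrix n n R) : Prop :=
  ∀ i, ¬ Relation.TransGen (fun i j => A i j ≠ 0) i i

section Semiring

variable [Semiring R] {A : Matrix n n R}

theorem add_le_of_pow_apply_ne_zero {h : n → ℕ} (hh : ∀ i j, A i j ≠ 0 → h i < h j) {k : ℕ}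
    {i j : n} (hk : (A ^ k) i j ≠ 0) : h i + k ≤ h j := by
  induction k generalizing j with
  | zero =>
    obtain rfl : i = j := by
      by_contra hij
      exact hk (by simp [one_apply_ne hij])
    simp
  | succ k ih =>
    rw [pow_succ, mul_apply] at hk
    obtain ⟨l, -, hl⟩ := Finset.exists_ne_zero_of_sum_ne_zero hk
    have hil := ih (left_ne_zero_of_mul hl)
    have hlj := hh l j (right_ne_zero_of_mul hl)
    omega

theorem pow_eq_zero_of_forall_lt {h : n → ℕ} (hh : ∀ i j, A i j ≠ 0 → h i < h j) {m : ℕ}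
    (hm : ∀ i, h i < m) : A ^ m = 0 := by
  ext i j
  by_contra hij
  have := add_le_of_pow_apply_ne_zero hh hij
  have := hm j
  omega

theorem IsAcyclic.pow_card_eq_zero (hA : A.IsAcyclic) : A ^ Fintype.card n = 0 := by
  classical
  let pred (j : n) : Finset n := {x | Relation.TransGen (fun i j => A i j ≠ 0) x j}
  refine pow_eq_zero_of_forall_lt (h := fun j => (pred j).card) (fun i j hij => ?_)
    (fun j => Finset.card_lt_univ_of_notMem (by simpa [pred] using hA j))
  refine Finset.card_lt_card (Finset.ssubset_iff_of_subset ?_ |>.mpr ⟨i, ?_, ?_⟩)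
  · intro x hx
    simp only [pred, Finset.mem_filter, Finset.mem_univ, true_and] at hx ⊢
    exact hx.tail hij
  · exact Finset.mem_filter.mpr ⟨Finset.mem_univ i, .single hij⟩
  · simpa [pred] using hA i

end Semiring

theorem trace_pow_eq_zero_of_isNilpotent [CommRing R] [IsReduced R] {A : Matrix n n R}
    (hA : IsNilpotent A) {k : ℕ} (hk : k ≠ 0) : trace (A ^ k) = 0 :=
  (isNilpotent_trace_of_isNilpotent (hA.pow_of_pos hk)).eq_zero

section OrderedRing

variable [CommRing R] [LinearOrder R] [IsStrictOrderedRing R] {A : Matrix n n R}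

theorem exists_pow_succ_apply_pos_of_transGen (hA : ∀ i j, 0 ≤ A i j) {i j : n}
    (h : Relation.TransGen (fun i j => A i j ≠ 0) i j) : ∃ k, 0 < (A ^ (k + 1)) i j := by
  induction h with
  | single hij => exact ⟨0, by simpa using (hA _ _).lt_of_ne' hij⟩
  | @tail b c _ hbc ih =>
    obtain ⟨k, hk⟩ := ih
    refine ⟨k + 1, (mul_pos hk ((hA b c).lt_of_ne' hbc)).trans_le ?_⟩
    rw [pow_succ _ (k + 1), mul_apply]
    exact Finset.single_le_sum (f := fun l => (A ^ (k + 1)) i l * A l c)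
      (fun l _ => mul_nonneg (pow_apply_nonneg hA _ i l) (hA l c)) (Finset.mem_univ b)

theorem isAcyclic_iff_forall_trace_pow_eq_zero (hA : ∀ i j, 0 ≤ A i j) :
    A.IsAcyclic ↔ ∀ k ≠ 0, trace (A ^ k) = 0 := by
  constructor
  · exact fun hacyc _ => trace_pow_eq_zero_of_isNilpotent ⟨_, hacyc.pow_card_eq_zero⟩
  · intro htr i hcyc
    obtain ⟨k, hk⟩ := exists_pow_succ_apply_pos_of_transGen hA hcyc
    have hle : (A ^ (k + 1)) i i ≤ trace (A ^ (k + 1)) :=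
      Finset.single_le_sum (fun j _ => pow_apply_nonneg hA _ j j) (Finset.mem_univ i)
    exact (hk.trans_le hle).ne' (htr _ k.succ_ne_zero)

theorem isAcyclic_iff_pow_card_eq_zero (hA : ∀ i j, 0 ≤ A i j) :
    A.IsAcyclic ↔ A ^ Fintype.card n = 0 := by
  refine ⟨IsAcyclic.pow_card_eq_zero, fun h => ?_⟩
  rw [isAcyclic_iff_forall_trace_pow_eq_zero hA]
  exact fun _ => trace_pow_eq_zero_of_isNilpotent ⟨_, h⟩

end OrderedRing

theorem hasSum_trace_exp {𝕂 : Type*} [RCLike 𝕂] (A : Matrix n n 𝕂) :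
    HasSum (fun k => (k !⁻¹ : 𝕂) * trace (A ^ k)) (trace (NormedSpace.exp A)) := by
  have h := open scoped Norms.Operator in
    (NormedSpace.exp_series_hasSum_exp' (𝕂 := 𝕂) A).map (traceAddMonoidHom n 𝕂)
      continuous_id.matrix_trace
  simp only [Function.comp_def, traceAddMonoidHom_apply, trace_smul, smul_eq_mul] at h
  exact h

theorem trace_exp_eq_card_iff {A : Matrix n n ℝ} (hA : ∀ i j, 0 ≤ A i j) :
    trace (NormedSpace.exp A) = Fintype.card n ↔ ∀ k ≠ 0, trace (A ^ k) = 0 := by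
  have htr (k : ℕ) : 0 ≤ trace (A ^ k) :=
    Finset.sum_nonneg fun i _ => pow_apply_nonneg hA k i i
  simpa [Nat.factorial_ne_zero] using (hasSum_trace_exp A).eq_apply_iff_forall_ne_eq_zero
    (fun k => mul_nonneg (by positivity) (htr k)) 0

end Matrix

theorem notears_constraint_iff_nilpotent_iff_acyclic_general
    (d : ℕ) (B : Matrix (Fin d) (Fin d) ℝ) :
    (Matrix.trace (NormedSpace.exp (B ⊙ B)) = (d : ℝ) ↔ (B ⊙ B) ^ d = 0) ∧
    ((B ⊙ B) ^ d = 0 ↔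
      ∀ i : Fin d, ¬ Relation.TransGen (fun j i : Fin d => B j i ≠ 0) i i) := by
  have hA : ∀ i j, 0 ≤ (B ⊙ B) i j := fun i j => mul_self_nonneg (B i j)
  have hsupp : (fun i j => (B ⊙ B) i j ≠ 0) = fun i j => B i j ≠ 0 := by
    ext i j
    exact mul_self_ne_zero
  have hexp := trace_exp_eq_card_iff hA
  have hnil := isAcyclic_iff_pow_card_eq_zero hA
  rw [Fintype.card_fin] at hexp hnil
  constructor
  · rw [hexp, ← hnil, isAcyclic_iff_forall_trace_pow_eq_zero hA]
  · rw [← hnil, IsAcyclic, hsupp]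

/-- Acyclicity characterization underlying the NOTEARS constraint: `Tr(exp(B∘B)) = d` iff
`B∘B` is nilpotent (`(B∘B)^d = 0`), iff the directed graph with an edge `j → i` whenever
`B j i ≠ 0` has no directed cycles (no vertex reaches itself by a nonempty directed path). -/
theorem notears_constraint_iff_nilpotent_iff_acyclic
    (d : ℕ) (hd : 1 ≤ d) (B : Matrix (Fin d) (Fin d) ℝ) :
    (Matrix.trace (NormedSpace.exp (B ⊙ B)) = (d : ℝ) ↔ (B ⊙ B) ^ d = 0) ∧
    ((B ⊙ B) ^ d = 0 ↔
      ∀ i : Fin d, ¬ Relation.TransGen (fun j i : Fin d => B j i ≠ 0) i i) :=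
  notears_constraint_iff_nilpotent_iff_acyclic_general d B
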